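/- For every configuration M(i,j,U,V) of Minsky's universal Turing machine, the following are equivalent: (i) the machine, started in configuration M(i,j,U,V), halts in finitely many steps; (ii) there exists a positive integer N such that t^N · W(i,j,U,V) = 0 in the algebra A. -/

import Mathlib

noncomputable section

/-- Direction of the head movement of the Turing machine. -/
inductive Dir
  | L
  | R
deriving DecidableEq

/-- The instruction table of Minsky's universal Turing machine: for a state `i` and a color `j`,
`instr i j` is `some (d, q, p)` where `d` is the direction of the head movement, `q` the new
state and `p` the new color of the current cell; it is `none` exactly for the STOP pair
`(4, 3)`. -/
def instr : Fin 7 → Fin 4 → Option (Dir × Fin 7 × Fin 4) := fun i j =>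
  match i.val, j.val with
  | 0, 0 => some (Dir.L, 4, 1)
  | 0, 1 => some (Dir.L, 1, 3)
  | 0, 2 => some (Dir.R, 0, 0)
  | 0, 3 => some (Dir.R, 0, 1)
  | 1, 0 => some (Dir.L, 1, 2)
  | 1, 1 => some (Dir.L, 1, 3)
  | 1, 2 => some (Dir.R, 0, 0)
  | 1, 3 => some (Dir.L, 1, 3)
  | 2, 0 => some (Dir.R, 2, 2)
  | 2, 1 => some (Dir.R, 2, 1)
  | 2, 2 => some (Dir.R, 2, 0)
  | 2, 3 => some (Dir.L, 4, 1)
  | 3, 0 => some (Dir.R, 3, 2)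
  | 3, 1 => some (Dir.R, 3, 1)
  | 3, 2 => some (Dir.R, 3, 0)
  | 3, 3 => some (Dir.L, 4, 0)
  | 4, 0 => some (Dir.L, 5, 2)
  | 4, 1 => some (Dir.L, 4, 1)
  | 4, 2 => some (Dir.L, 4, 0)
  | 4, 3 => none
  | 5, 0 => some (Dir.L, 5, 2)
  | 5, 1 => some (Dir.L, 5, 1)
  | 5, 2 => some (Dir.L, 6, 2)
  | 5, 3 => some (Dir.R, 2, 1)
  | 6, 0 => some (Dir.R, 0, 3)
  | 6, 1 => some (Dir.R, 6, 3)
  | 6, 2 => some (Dir.R, 6, 2)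
  | 6, 3 => some (Dir.R, 3, 1)
  | _, _ => none

/-- A configuration `M(i, j, U, V)` of the machine: the current state `i`, the color `j` of the
current cell, and the lists `U`, `V` of colors of the tape to the left and to the right of the
head. -/
structure Config where
  state : Fin 7
  color : Fin 4
  left : List (Fin 4)
  right : List (Fin 4)

/-- One step of the machine: for a left pair, `M(i,j,U'++[k],V)` passes to
`M(q i j, k, U', p i j :: V)` and `M(i,j,[],V)` passes to `M(q i j, 0, [], p i j :: V)`;
for a right pair, `M(i,j,U,k::V')` passes to `M(q i j, k, U ++ [p i j], V')` and
`M(i,j,U,[])` passes to `M(q i j, 0, U ++ [p i j], [])`. No step is possible from the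
STOP pair `(4,3)`. -/
def step (c : Config) : Option Config :=
  match instr c.state c.color with
  | none => none
  | some (Dir.L, q, p) =>
    match c.left.reverse with
    | [] => some ⟨q, 0, [], p :: c.right⟩
    | k :: U' => some ⟨q, k, U'.reverse, p :: c.right⟩
  | some (Dir.R, q, p) =>
    match c.right with
    | [] => some ⟨q, 0, c.left ++ [p], []⟩
    | k :: V' => some ⟨q, k, c.left ++ [p], V'⟩

/-- Iterating `n` steps of the machine. -/
def stepsFrom : ℕ → Config → Option Config
  | 0, c => some c
  | n + 1, c => (step c).bind (stepsFrom n)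

/-- The machine halts from the configuration `c` if after finitely many steps it reaches a
configuration whose (state, current color) pair is `(4, 3)`. -/
def Halts (c : Config) : Prop :=
  ∃ n c', stepsFrom n c = some c' ∧ c'.state = 4 ∧ c'.color = 3

/-- The alphabet `Φ = {t, a_0, …, a_3, Q_0, …, Q_6, P_0, …, P_3, R}`. -/
inductive Phi
  | t
  | a (k : Fin 4)
  | Q (i : Fin 7)
  | P (j : Fin 4)
  | R
deriving DecidableEq, Fintype

/-- The image in the free algebra of a word over the alphabet `Φ`. -/
def wrd (K : Type*) [Field K] (l : List Phi) : FreeAlgebra K Phi :=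
  (l.map (FreeAlgebra.ι K)).prod

open Phi in
/-- The defining relations of the algebra `A`. -/
inductive ARel (K : Type*) [Field K] : FreeAlgebra K Phi → FreeAlgebra K Phi → Prop
  | rel1 (l : Fin 4) :
      ARel K (wrd K [t, R, a l]) (wrd K [R, t, a l])
  | rel1b (l : Fin 4) :
      ARel K (wrd K [t, a l, R]) (wrd K [a l, R, t])
  | rel2 (k n : Fin 4) :
      ARel K (wrd K [t, a k, a n]) (wrd K [a k, t, a n])
  | rel3 (i : Fin 7) (j : Fin 4) (q : Fin 7) (p : Fin 4) (k : Fin 4)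
      (h : instr i j = some (Dir.L, q, p)) :
      ARel K (wrd K [t, a k, Q i, P j]) (wrd K [Q q, P k, t, a p])
  | rel5 (i : Fin 7) (j : Fin 4) (q : Fin 7) (p : Fin 4)
      (h : instr i j = some (Dir.L, q, p)) :
      ARel K (wrd K [t, R, Q i, P j]) (wrd K [R, Q q, P 0, t, a p])
  | rel4 (i : Fin 7) (j : Fin 4) (q : Fin 7) (p : Fin 4) (l k n : Fin 4)
      (h : instr i j = some (Dir.R, q, p)) :
      ARel K (wrd K [t, a l, Q i, P j, a k, a n]) (wrd K [a l, a p, Q q, P k, t, a n])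
  | rel4r (i : Fin 7) (j : Fin 4) (q : Fin 7) (p : Fin 4) (l k : Fin 4)
      (h : instr i j = some (Dir.R, q, p)) :
      ARel K (wrd K [t, a l, Q i, P j, a k, R]) (wrd K [a l, a p, Q q, P k, R, t])
  | rel4b (i : Fin 7) (j : Fin 4) (q : Fin 7) (p : Fin 4) (k n : Fin 4)
      (h : instr i j = some (Dir.R, q, p)) :
      ARel K (wrd K [t, R, Q i, P j, a k, a n]) (wrd K [R, a p, Q q, P k, t, a n])
  | rel4ar (i : Fin 7) (j : Fin 4) (q : Fin 7) (p : Fin 4) (k : Fin 4)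
      (h : instr i j = some (Dir.R, q, p)) :
      ARel K (wrd K [t, R, Q i, P j, a k, R]) (wrd K [R, a p, Q q, P k, R, t])
  | rel6 (i : Fin 7) (j : Fin 4) (q : Fin 7) (p : Fin 4) (l : Fin 4)
      (h : instr i j = some (Dir.R, q, p)) :
      ARel K (wrd K [t, a l, Q i, P j, R]) (wrd K [a l, a p, Q q, P 0, R, t])
  | rel6b (i : Fin 7) (j : Fin 4) (q : Fin 7) (p : Fin 4)
      (h : instr i j = some (Dir.R, q, p)) :
      ARel K (wrd K [t, R, Q i, P j, R]) (wrd K [R, a p, Q q, P 0, R, t])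
  | rel7 :
      ARel K (wrd K [Q 4, P 3]) 0

/-- The algebra `A`: the quotient of the free associative unital `K`-algebra on `Φ` by the
two-sided ideal generated by the defining relations. -/
abbrev AlgA (K : Type*) [Field K] := RingQuot (ARel K)

/-- The image in `A` of a word over the alphabet `Φ`. -/
def mkw (K : Type*) [Field K] (l : List Phi) : AlgA K :=
  RingQuot.mkAlgHom K (ARel K) (wrd K l)

/-- The image of the letter `t` in `A`. -/
def tEl (K : Type*) [Field K] : AlgA K := mkw K [Phi.t]

/-- The word `R a_{u_1} ⋯ a_{u_k} Q_i P_j a_{v_1} ⋯ a_{v_l} R` associated to a configuration. -/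
def confWord (c : Config) : List Phi :=
  Phi.R :: (c.left.map Phi.a ++ [Phi.Q c.state, Phi.P c.color] ++ c.right.map Phi.a ++ [Phi.R])

/-- The element `W(i, j, U, V)` of the algebra `A` associated to a configuration. -/
def W (K : Type*) [Field K] (c : Config) : AlgA K := mkw K (confWord c)


/-!
Orient every defining relation of `A` except `Q₄P₃ = 0` from left to right. Each rule moves a
letter `t` to the right, and one sweep of `t` across `W(c)` performs one step of the machine, so
`t^N W(c)` rewrites to `W(c_N) t^N`, where `c_N` is the configuration after `N` steps. If the
machine halts, `W(c_N)` contains `Q₄P₃`, hence vanishes in `A`.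

Conversely, every left side is `t` followed by a `t`-free word, so two redexes are disjoint or
coincide and the rewriting is confluent; and rewriting never destroys a factor `Q₄P₃`. Letting `A`
act on the classes of words modulo rewriting, with the classes of words containing `Q₄P₃` killed,
shows that a word vanishing in `A` is equivalent to a word containing `Q₄P₃`. If the machine runs
forever, `W(c_N) t^N` is irreducible and free of `Q₄P₃`, so by confluence `t^N W(c)` is not
equivalent to such a word.
-/

namespace MinskyAlgebra

open Relation List

section StringRewriting

variable {α : Type*} {rule : List α → List α → Prop}

def RewriteStep (rule : List α → List α → Prop) (w w' : List α) : Prop :=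
  ∃ x y l r, rule l r ∧ w = x ++ l ++ y ∧ w' = x ++ r ++ y

theorem RewriteStep.of_rule {l r : List α} (h : rule l r) (x y : List α) :
    RewriteStep rule (x ++ l ++ y) (x ++ r ++ y) :=
  ⟨x, y, l, r, h, rfl, rfl⟩

theorem RewriteStep.append_append {w w' : List α} (h : RewriteStep rule w w') (x y : List α) :
    RewriteStep rule (x ++ w ++ y) (x ++ w' ++ y) := by
  obtain ⟨x₀, y₀, l, r, hr, rfl, rfl⟩ := h
  simpa using RewriteStep.of_rule hr (x ++ x₀) (y₀ ++ y)

theorem reflTransGen_rewriteStep_append_append {w w' : List α}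
    (h : ReflTransGen (RewriteStep rule) w w') (x y : List α) :
    ReflTransGen (RewriteStep rule) (x ++ w ++ y) (x ++ w' ++ y) :=
  h.lift (fun w => x ++ w ++ y) fun _ _ hs => hs.append_append x y

theorem reflTransGen_rewriteStep_cons {w w' : List α}
    (h : ReflTransGen (RewriteStep rule) w w') (s : α) :
    ReflTransGen (RewriteStep rule) (s :: w) (s :: w') := by
  simpa using reflTransGen_rewriteStep_append_append h [s] []

theorem pair_infix_append_iff {a b : α} {x y : List α} :
    [a, b] <:+: x ++ y ↔
      [a, b] <:+: x ∨ [a, b] <:+: y ∨ (x.getLast? = some a ∧ y.head? = some b) := by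
  rw [infix_append_iff_ne_nil]
  refine or_congr_right (or_congr_right ⟨?_, fun ⟨hx, hy⟩ => ⟨[a], [b], by simp, by simp, rfl,
    singleton_suffix_iff_getLast?_eq_some.mpr hx, singleton_prefix_iff_head?_eq_some.mpr hy⟩⟩)
  rintro ⟨_ | ⟨a', _ | ⟨a'', l₁⟩⟩, l₂, h₁, h₂, h, hx, hy⟩
  · exact absurd rfl h₁
  · obtain ⟨rfl, rfl⟩ : a = a' ∧ [b] = l₂ := by simpa using h
    exact ⟨singleton_suffix_iff_getLast?_eq_some.mp hx, singleton_prefix_iff_head?_eq_some.mp hy⟩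
  · simp [eq_comm (a := []), h₂] at h

theorem RewriteStep.pair_infix {a b : α}
    (hrule : ∀ {l r}, rule l r →
      l ≠ [] ∧ ¬[a, b] <:+: l ∧ l.head? ≠ some b ∧ l.getLast? ≠ some a)
    {w w' : List α} (h : RewriteStep rule w w') (hw : [a, b] <:+: w) : [a, b] <:+: w' := by
  obtain ⟨x, y, l, r, hr, rfl, rfl⟩ := h
  obtain ⟨hl, hab, hb, ha⟩ := hrule hr
  rw [append_assoc, pair_infix_append_iff, pair_infix_append_iff] at hw
  rcases hw with hx | (hab' | hy | ⟨ha', -⟩) | ⟨-, hb'⟩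
  · exact infix_append_of_infix_left (infix_append_of_infix_left hx)
  · exact absurd hab' hab
  · exact infix_append_of_infix_right hy
  · exact absurd ha' ha
  · obtain ⟨c, l, rfl⟩ := exists_cons_of_ne_nil hl
    exact absurd (by simpa using hb') hb

/-- Two redexes of such a system are disjoint or start at the same position, where the rules
agree; hence its rewriting is confluent. -/
structure IsMarked (t : α) (rule : List α → List α → Prop) : Prop where
  lhs_eq : ∀ {l r}, rule l r → ∃ c s, l = t :: c :: s ∧ t ∉ c :: s
  deterministic : ∀ {l₁ r₁ l₂ r₂ y₁ y₂}, rule l₁ r₁ → rule l₂ r₂ →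
    l₁ ++ y₁ = l₂ ++ y₂ → r₁ ++ y₁ = r₂ ++ y₂

variable {t : α}

theorem IsMarked.eq_or_disjoint (hR : IsMarked t rule) {l₁ r₁ l₂ r₂ m y₁ y₂ : List α}
    (h₁ : rule l₁ r₁) (h₂ : rule l₂ r₂) (e : l₁ ++ y₁ = m ++ (l₂ ++ y₂)) :
    (m = [] ∧ r₁ ++ y₁ = r₂ ++ y₂) ∨ ∃ m', m = l₁ ++ m' ∧ y₁ = m' ++ (l₂ ++ y₂) := by
  rcases m with _ | ⟨d, m⟩
  · exact Or.inl ⟨rfl, hR.deterministic h₁ h₂ (by simpa using e)⟩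
  right
  obtain ⟨c, s, rfl, hs⟩ := hR.lhs_eq h₁
  obtain ⟨rfl, e'⟩ : t = d ∧ c :: s ++ y₁ = m ++ (l₂ ++ y₂) := by simpa using e
  rcases append_eq_append_iff.mp e' with ⟨m', rfl, rfl⟩ | ⟨_ | ⟨d', m'⟩, hm, hy⟩
  · exact ⟨m', rfl, rfl⟩
  · exact ⟨[], by simpa using hm.symm, by simpa using hy.symm⟩
  · obtain ⟨c₂, s₂, rfl, -⟩ := hR.lhs_eq h₂
    obtain ⟨rfl, -⟩ : t = d' ∧ _ := by simpa using hy
    exact absurd (hm ▸ mem_append_right m mem_cons_self) hs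

theorem IsMarked.diamond (hR : IsMarked t rule) {w u₁ u₂ : List α}
    (h₁ : RewriteStep rule w u₁) (h₂ : RewriteStep rule w u₂) :
    u₁ = u₂ ∨ ∃ v, RewriteStep rule u₁ v ∧ RewriteStep rule u₂ v := by
  obtain ⟨x₁, y₁, l₁, r₁, hr₁, rfl, rfl⟩ := h₁
  obtain ⟨x₂, y₂, l₂, r₂, hr₂, e, rfl⟩ := h₂
  rw [append_assoc, append_assoc] at e
  rcases append_eq_append_iff.mp e with ⟨m, rfl, hm⟩ | ⟨m, rfl, hm⟩
  · rcases hR.eq_or_disjoint hr₁ hr₂ hm with ⟨rfl, h⟩ | ⟨m', rfl, rfl⟩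
    · simp [h]
    · exact .inr ⟨x₁ ++ r₁ ++ m' ++ r₂ ++ y₂,
        by simpa using RewriteStep.of_rule hr₂ (x₁ ++ r₁ ++ m') y₂,
        by simpa using RewriteStep.of_rule hr₁ x₁ (m' ++ r₂ ++ y₂)⟩
  · rcases hR.eq_or_disjoint hr₂ hr₁ hm with ⟨rfl, h⟩ | ⟨m', rfl, rfl⟩
    · simp [h]
    · exact .inr ⟨x₂ ++ r₂ ++ m' ++ r₁ ++ y₁,
        by simpa using RewriteStep.of_rule hr₂ x₂ (m' ++ r₁ ++ y₁),
        by simpa using RewriteStep.of_rule hr₁ (x₂ ++ r₂ ++ m') y₁⟩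

theorem IsMarked.join_of_eqvGen (hR : IsMarked t rule) {w w' : List α}
    (h : EqvGen (RewriteStep rule) w w') : Join (ReflTransGen (RewriteStep rule)) w w' := by
  refine (equivalence_join_reflTransGen fun a b c hb hc => ?_).eqvGen_iff.mp
    (h.mono fun a b hab => ⟨b, .single hab, .refl⟩)
  rcases hR.diamond hb hc with rfl | ⟨d, hbd, hcd⟩
  · exact ⟨b, .refl, .refl⟩
  · exact ⟨d, .single hbd, .single hcd⟩

theorem IsMarked.reflTransGen_of_eqvGen (hR : IsMarked t rule) {w w' n : List α}
    (h : EqvGen (RewriteStep rule) w w') (hn : ReflTransGen (RewriteStep rule) w n)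
    (hirr : ∀ u, ¬RewriteStep rule n u) : ReflTransGen (RewriteStep rule) w' n := by
  obtain ⟨v, hnv, hw'v⟩ :=
    hR.join_of_eqvGen ((EqvGen.symm _ _ (EqvGen.reflTransGen_le_eqvGen _ _ _ hn)).trans _ _ _ h)
  rcases hnv.cases_head with rfl | ⟨u, hu, -⟩
  · exact hw'v
  · exact absurd hu (hirr u)

theorem IsMarked.not_rewriteStep_append_replicate (hR : IsMarked t rule) {w : List α}
    (hw : t ∉ w) (N : ℕ) (u : List α) : ¬RewriteStep rule (w ++ replicate N t) u := by
  rintro ⟨x, y, l, r, hr, e, -⟩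
  obtain ⟨c, s, rfl, hcs⟩ := hR.lhs_eq hr
  have htc : [t, c] <:+: w ++ replicate N t := e ▸ ⟨x, s ++ y, by simp⟩
  rcases pair_infix_append_iff.mp htc with h | h | ⟨h, -⟩
  · exact hw (h.subset mem_cons_self)
  · exact hcs (mem_cons.mpr (Or.inl (eq_of_mem_replicate (h.subset (by simp))).symm))
  · exact hw (mem_of_getLast? h)

end StringRewriting

open Phi

/-- The defining relations of `A` other than `Q₄P₃ = 0`, oriented from left to right. -/
inductive Rule : List Phi → List Phi → Prop
  | rel1 (l : Fin 4) : Rule [t, R, a l] [R, t, a l]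
  | rel1b (l : Fin 4) : Rule [t, a l, R] [a l, R, t]
  | rel2 (k n : Fin 4) : Rule [t, a k, a n] [a k, t, a n]
  | rel3 (i : Fin 7) (j : Fin 4) (q : Fin 7) (p : Fin 4) (k : Fin 4)
      (h : instr i j = some (Dir.L, q, p)) :
      Rule [t, a k, Q i, P j] [Q q, P k, t, a p]
  | rel5 (i : Fin 7) (j : Fin 4) (q : Fin 7) (p : Fin 4)
      (h : instr i j = some (Dir.L, q, p)) :
      Rule [t, R, Q i, P j] [R, Q q, P 0, t, a p]
  | rel4 (i : Fin 7) (j : Fin 4) (q : Fin 7) (p : Fin 4) (l k n : Fin 4)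
      (h : instr i j = some (Dir.R, q, p)) :
      Rule [t, a l, Q i, P j, a k, a n] [a l, a p, Q q, P k, t, a n]
  | rel4r (i : Fin 7) (j : Fin 4) (q : Fin 7) (p : Fin 4) (l k : Fin 4)
      (h : instr i j = some (Dir.R, q, p)) :
      Rule [t, a l, Q i, P j, a k, R] [a l, a p, Q q, P k, R, t]
  | rel4b (i : Fin 7) (j : Fin 4) (q : Fin 7) (p : Fin 4) (k n : Fin 4)
      (h : instr i j = some (Dir.R, q, p)) :
      Rule [t, R, Q i, P j, a k, a n] [R, a p, Q q, P k, t, a n]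
  | rel4ar (i : Fin 7) (j : Fin 4) (q : Fin 7) (p : Fin 4) (k : Fin 4)
      (h : instr i j = some (Dir.R, q, p)) :
      Rule [t, R, Q i, P j, a k, R] [R, a p, Q q, P k, R, t]
  | rel6 (i : Fin 7) (j : Fin 4) (q : Fin 7) (p : Fin 4) (l : Fin 4)
      (h : instr i j = some (Dir.R, q, p)) :
      Rule [t, a l, Q i, P j, R] [a l, a p, Q q, P 0, R, t]
  | rel6b (i : Fin 7) (j : Fin 4) (q : Fin 7) (p : Fin 4)
      (h : instr i j = some (Dir.R, q, p)) :
      Rule [t, R, Q i, P j, R] [R, a p, Q q, P 0, R, t]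

abbrev Rw : List Phi → List Phi → Prop := RewriteStep Rule

theorem rule_isMarked : IsMarked t Rule where
  lhs_eq h := by rcases h <;> exact ⟨_, _, rfl, by simp⟩
  -- left sides that are prefixes of a common word coincide, and `instr` is a function
  deterministic h₁ h₂ e := by rcases h₁ <;> rcases h₂ <;> simp_all

def ContainsStop (w : List Phi) : Prop := [Q 4, P 3] <:+: w

theorem Rule.lhs_stop_free {l r : List Phi} (h : Rule l r) :
    l ≠ [] ∧ ¬[Q 4, P 3] <:+: l ∧ l.head? ≠ some (P 3) ∧ l.getLast? ≠ some (Q 4) := by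
  rcases h <;> simp [infix_cons_iff] <;> rintro rfl rfl <;> simp_all [instr]

theorem ContainsStop.reflTransGen {w w' : List Phi} (hw : ContainsStop w)
    (h : ReflTransGen Rw w w') : ContainsStop w' :=
  h.rec hw fun _ hs ih => hs.pair_infix Rule.lhs_stop_free ih

theorem containsStop_confWord {c : Config} (h4 : c.state = 4) (h3 : c.color = 3) :
    ContainsStop (confWord c) :=
  ⟨R :: c.left.map a, c.right.map a ++ [R], by simp [confWord, h4, h3]⟩

theorem t_not_mem_confWord (c : Config) : t ∉ confWord c := by
  simp [confWord]

theorem not_containsStop_confWord_append_replicate {c : Config}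
    (h : ¬(c.state = 4 ∧ c.color = 3)) (N : ℕ) :
    ¬ContainsStop (confWord c ++ replicate N t) := by
  intro hw
  have hQ := hw.subset mem_cons_self
  have hP := hw.subset (mem_cons_of_mem _ mem_cons_self)
  exact h ⟨by simpa [confWord, eq_comm] using hQ, by simpa [confWord, eq_comm] using hP⟩

theorem rw_t_through_letters (U : List (Fin 4)) (u : Fin 4) (z : List Phi) :
    ReflTransGen Rw (t :: (U.map a ++ a u :: z)) (U.map a ++ t :: a u :: z) := by
  induction U with
  | nil => exact .refl
  | cons u₁ U ih =>
    rcases U with _ | ⟨u₂, U⟩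
    · exact .single ⟨[], z, _, _, .rel2 u₁ u, rfl, rfl⟩
    · exact .head ⟨[], U.map a ++ a u :: z, _, _, .rel2 u₁ u₂, by simp, rfl⟩
        (by simpa using reflTransGen_rewriteStep_cons ih (a u₁))

theorem rw_t_through_right_tape (V : List (Fin 4)) (v : Fin 4) (z : List Phi) :
    ReflTransGen Rw (t :: a v :: (V.map a ++ R :: z)) (a v :: V.map a ++ R :: t :: z) := by
  induction V generalizing v with
  | nil => exact .single ⟨[], z, _, _, .rel1b v, rfl, rfl⟩
  | cons v₂ V ih =>
    exact .head ⟨[], V.map a ++ R :: z, _, _, .rel2 v v₂, by simp, rfl⟩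
      (by simpa using reflTransGen_rewriteStep_cons (ih v₂) (a v))

theorem rw_t_through_left_tape (U : List (Fin 4)) (u : Fin 4) (z : List Phi) :
    ReflTransGen Rw (t :: R :: (U.map a ++ a u :: z)) (R :: U.map a ++ t :: a u :: z) := by
  rcases U with _ | ⟨u₁, U⟩
  · exact .single ⟨[], z, _, _, .rel1 u, rfl, rfl⟩
  · exact .head ⟨[], U.map a ++ a u :: z, _, _, .rel1 u₁, by simp, rfl⟩
      (by simpa using reflTransGen_rewriteStep_cons (rw_t_through_letters (u₁ :: U) u z) R)

/-- `t` travels through `R a_{u_1} ⋯ a_{u_k}` up to its last letter `e`. -/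
theorem exists_rw_t_through_left_tape (U : List (Fin 4)) :
    ∃ pre e, (e = R ∨ ∃ l, e = a l) ∧ (∀ x, R :: (U.map a ++ x) = pre ++ e :: x) ∧
      ∀ z, ReflTransGen Rw (t :: (pre ++ e :: z)) (pre ++ t :: e :: z) := by
  rcases eq_nil_or_concat U with rfl | ⟨U, u, rfl⟩
  · exact ⟨[], R, .inl rfl, fun x => rfl, fun z => .refl⟩
  · exact ⟨R :: U.map a, a u, .inr ⟨u, rfl⟩, fun x => by simp,
      fun z => by simpa using rw_t_through_left_tape U u z⟩

theorem Rule.of_instr_eq_right {i : Fin 7} {j : Fin 4} {q : Fin 7} {p : Fin 4} {e : Phi}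
    (he : e = R ∨ ∃ l, e = a l) (h : instr i j = some (Dir.R, q, p)) :
    (∀ k n, Rule [t, e, Q i, P j, a k, a n] [e, a p, Q q, P k, t, a n]) ∧
      (∀ k, Rule [t, e, Q i, P j, a k, R] [e, a p, Q q, P k, R, t]) ∧
      Rule [t, e, Q i, P j, R] [e, a p, Q q, P 0, R, t] := by
  rcases he with rfl | ⟨l, rfl⟩
  · exact ⟨fun k n => .rel4b i j q p k n h, fun k => .rel4ar i j q p k h, .rel6b i j q p h⟩
  · exact ⟨fun k n => .rel4 i j q p l k n h, fun k => .rel4r i j q p l k h, .rel6 i j q p l h⟩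

theorem reflTransGen_rw_of_step_right {c c' : Config} {q : Fin 7} {p : Fin 4}
    (hi : instr c.state c.color = some (Dir.R, q, p)) (hc : step c = some c') :
    ReflTransGen Rw (t :: confWord c) (confWord c' ++ [t]) := by
  obtain ⟨i, j, U, V⟩ := c
  obtain ⟨pre, e, he, hU, hsweep⟩ := exists_rw_t_through_left_tape U
  obtain ⟨hmove, hmove_last, hmove_blank⟩ := Rule.of_instr_eq_right he hi
  rcases V with _ | ⟨k, _ | ⟨n, V⟩⟩ <;> simp only [step, hi, Option.some.injEq] at hc <;>
    subst hc <;>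
    simp only [confWord, map_append, map_cons, map_nil, append_assoc, cons_append, nil_append, hU]
  · exact (hsweep _).tail ⟨pre, [], _, _, hmove_blank, by simp, by simp⟩
  · exact (hsweep _).tail ⟨pre, [], _, _, hmove_last k, by simp, by simp⟩
  · refine ((hsweep _).tail ⟨pre, V.map a ++ [R], _, _, hmove k n, by simp, rfl⟩).trans ?_
    simpa using reflTransGen_rewriteStep_append_append
      (rw_t_through_right_tape V n []) (pre ++ [e, a p, Q q, P k]) []

theorem reflTransGen_rw_of_step_left {c c' : Config} {q : Fin 7} {p : Fin 4}
    (hi : instr c.state c.color = some (Dir.L, q, p)) (hc : step c = some c') :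
    ReflTransGen Rw (t :: confWord c) (confWord c' ++ [t]) := by
  obtain ⟨i, j, U, V⟩ := c
  rcases eq_nil_or_concat' U with rfl | ⟨U, k, rfl⟩ <;>
    simp only [step, hi, reverse_nil, reverse_append, reverse_singleton, singleton_append,
      reverse_reverse, Option.some.injEq] at hc <;>
    subst hc <;>
    simp only [confWord, map_append, map_cons, map_nil, append_assoc, cons_append, nil_append]
  · refine .head ⟨[], V.map a ++ [R], _, _, .rel5 i j q p hi, rfl, rfl⟩ ?_
    simpa using reflTransGen_rewriteStep_append_append
      (rw_t_through_right_tape V p []) [R, Q q, P 0] []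
  · refine ((rw_t_through_left_tape U k _).tail
      ⟨R :: U.map a, V.map a ++ [R], _, _, .rel3 i j q p k hi, by simp, rfl⟩).trans ?_
    simpa using reflTransGen_rewriteStep_append_append
      (rw_t_through_right_tape V p []) (R :: U.map a ++ [Q q, P k]) []

theorem reflTransGen_rw_of_step {c c' : Config} (hc : step c = some c') :
    ReflTransGen Rw (t :: confWord c) (confWord c' ++ [t]) := by
  rcases hi : instr c.state c.color with _ | ⟨_ | _, q, p⟩
  · simp [step, hi] at hc
  · exact reflTransGen_rw_of_step_left hi hc
  · exact reflTransGen_rw_of_step_right hi hc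

theorem reflTransGen_rw_of_stepsFrom {n : ℕ} {c c' : Config} (h : stepsFrom n c = some c') :
    ReflTransGen Rw (replicate n t ++ confWord c) (confWord c' ++ replicate n t) := by
  induction n generalizing c with
  | zero => cases h; simpa using .refl
  | succ n ih =>
    obtain ⟨c₁, hc₁, h⟩ := Option.bind_eq_some_iff.mp h
    have first : ReflTransGen Rw (replicate (n + 1) t ++ confWord c)
        (replicate n t ++ confWord c₁ ++ [t]) := by
      simpa [replicate_succ'] using reflTransGen_rewriteStep_append_append
        (reflTransGen_rw_of_step hc₁) (replicate n t) []
    simpa [replicate_succ'] using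
      first.trans (reflTransGen_rewriteStep_append_append (ih h) [] [t])

theorem instr_eq_none_iff : ∀ (i : Fin 7) (j : Fin 4), instr i j = none ↔ i = 4 ∧ j = 3 := by
  decide

theorem step_ne_none {c : Config} (h : ¬(c.state = 4 ∧ c.color = 3)) : step c ≠ none := by
  rcases hi : instr c.state c.color with _ | ⟨_ | _, q, p⟩
  · exact absurd ((instr_eq_none_iff _ _).mp hi) h
  all_goals simp only [step, hi]; split <;> simp

theorem stepsFrom_succ_eq_bind (n : ℕ) (c : Config) :
    stepsFrom (n + 1) c = (stepsFrom n c).bind step := by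
  induction n generalizing c with
  | zero => simp [stepsFrom]
  | succ n ih =>
    change (step c).bind (stepsFrom (n + 1)) = ((step c).bind (stepsFrom n)).bind step
    rw [funext ih, Option.bind_assoc]

theorem exists_stepsFrom_of_not_halts {c : Config} (hc : ¬Halts c) (n : ℕ) :
    ∃ c', stepsFrom n c = some c' ∧ ¬(c'.state = 4 ∧ c'.color = 3) := by
  induction n with
  | zero => exact ⟨c, rfl, fun h => hc ⟨0, c, rfl, h⟩⟩
  | succ n ih =>
    obtain ⟨c', hn, hstop⟩ := ih
    obtain ⟨c'', hc''⟩ := Option.ne_none_iff_exists'.mp (step_ne_none hstop)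
    have hsucc : stepsFrom (n + 1) c = some c'' := by
      rw [stepsFrom_succ_eq_bind, hn, Option.bind_some, hc'']
    exact ⟨c'', hsucc, fun h => hc ⟨n + 1, c'', hsucc, h⟩⟩

section Algebra

variable (K : Type*) [Field K]

theorem Rule.aRel {l r : List Phi} (h : Rule l r) : ARel K (wrd K l) (wrd K r) := by
  cases h with
  | rel1 l => exact .rel1 l
  | rel1b l => exact .rel1b l
  | rel2 k n => exact .rel2 k n
  | rel3 i j q p k h => exact .rel3 i j q p k h
  | rel5 i j q p h => exact .rel5 i j q p h
  | rel4 i j q p l k n h => exact .rel4 i j q p l k n h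
  | rel4r i j q p l k h => exact .rel4r i j q p l k h
  | rel4b i j q p k n h => exact .rel4b i j q p k n h
  | rel4ar i j q p k h => exact .rel4ar i j q p k h
  | rel6 i j q p l h => exact .rel6 i j q p l h
  | rel6b i j q p h => exact .rel6b i j q p h

variable {K} in
theorem rule_or_stop_of_aRel {x y : FreeAlgebra K Phi} (h : ARel K x y) :
    (∃ l r, Rule l r ∧ x = wrd K l ∧ y = wrd K r) ∨ (x = wrd K [Q 4, P 3] ∧ y = 0) := by
  cases h
  case rel7 => exact .inr ⟨rfl, rfl⟩
  all_goals exact .inl ⟨_, _, by constructor <;> assumption, rfl, rfl⟩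

theorem mkw_append (u v : List Phi) : mkw K (u ++ v) = mkw K u * mkw K v := by
  simp [mkw, wrd]

theorem mkw_eq_of_reflTransGen {w w' : List Phi} (h : ReflTransGen Rw w w') :
    mkw K w = mkw K w' := by
  induction h with
  | refl => rfl
  | tail _ hs ih =>
    obtain ⟨x, y, l, r, hr, rfl, rfl⟩ := hs
    rw [ih, mkw_append, mkw_append, mkw_append, mkw_append,
      show mkw K l = mkw K r from RingQuot.mkAlgHom_rel K (hr.aRel K)]

theorem mkw_eq_zero_of_containsStop {w : List Phi} (h : ContainsStop w) : mkw K w = 0 := by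
  obtain ⟨x, y, rfl⟩ := h
  rw [mkw_append, mkw_append, show mkw K [Q 4, P 3] = 0 from
    (RingQuot.mkAlgHom_rel K (ARel.rel7 (K := K))).trans (map_zero _), mul_zero, zero_mul]

theorem tEl_pow_mul_W (N : ℕ) (c : Config) :
    tEl K ^ N * W K c = mkw K (replicate N t ++ confWord c) := by
  induction N with
  | zero => simp [W, mkw, wrd]
  | succ N ih =>
    rw [pow_succ', mul_assoc, ih, replicate_succ, ← singleton_append, append_assoc,
      mkw_append K [t]]
    rfl

def stopClasses : Set (Quot Rw) := Quot.mk Rw '' {w | ContainsStop w}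

def consClass (s : Phi) : Quot Rw → Quot Rw :=
  Quot.map (s :: ·) fun _ _ h => by simpa using h.append_append [s] []

theorem consClass_image_stopClasses_subset (s : Phi) :
    consClass s '' stopClasses ⊆ stopClasses := by
  rintro _ ⟨_, ⟨w, ⟨x, y, rfl⟩, rfl⟩, rfl⟩
  exact ⟨s :: (x ++ [Q 4, P 3] ++ y), ⟨s :: x, y, rfl⟩, rfl⟩

/-- `A` acts on the span of the classes of words modulo rewriting, with the classes of words
containing `Q₄P₃` killed, each letter by prepending itself: a word `w` sends the class of the
empty word to the class of `w`. -/
abbrev ClassSpace := (Quot Rw →₀ K) ⧸ Finsupp.supported K K stopClasses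

def letterAct (s : Phi) : Module.End K (ClassSpace K) :=
  Submodule.mapQ _ _ (Finsupp.lmapDomain K K (consClass s)) <| by
    rw [← Submodule.map_le_iff_le_comap, Finsupp.lmapDomain_supported]
    exact Finsupp.supported_mono (consClass_image_stopClasses_subset s)

def wordVec (w : List Phi) : ClassSpace K :=
  Submodule.Quotient.mk (Finsupp.single (Quot.mk Rw w) 1)

theorem letterAct_wordVec (s : Phi) (w : List Phi) :
    letterAct K s (wordVec K w) = wordVec K (s :: w) := by
  rw [letterAct, wordVec, Submodule.mapQ_apply, Finsupp.lmapDomain_apply,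
    Finsupp.mapDomain_single]
  rfl

theorem wordVec_eq_zero_iff {w : List Phi} :
    wordVec K w = 0 ↔ ∃ b, ContainsStop b ∧ EqvGen Rw w b := by
  rw [wordVec, Submodule.Quotient.mk_eq_zero, Finsupp.mem_supported,
    Finsupp.support_single _ one_ne_zero, Finset.coe_singleton, Set.singleton_subset_iff]
  exact exists_congr fun b => and_congr_right fun _ => Quot.eq.trans ⟨.symm _ _, .symm _ _⟩

theorem endo_ext_wordVec {f g : Module.End K (ClassSpace K)}
    (h : ∀ w, f (wordVec K w) = g (wordVec K w)) : f = g := by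
  refine Submodule.linearMap_qext _ (Finsupp.lhom_ext' fun q => LinearMap.ext_ring ?_)
  induction q using Quot.ind
  exact h _

def freeRep : FreeAlgebra K Phi →ₐ[K] Module.End K (ClassSpace K) :=
  FreeAlgebra.lift K (letterAct K)

theorem freeRep_wrd_wordVec (w v : List Phi) :
    freeRep K (wrd K w) (wordVec K v) = wordVec K (w ++ v) := by
  induction w generalizing v with
  | nil => simp [wrd]
  | cons s w ih =>
    simp only [wrd, map_cons, prod_cons, map_mul, Module.End.mul_apply] at ih ⊢
    rw [ih, freeRep, FreeAlgebra.lift_ι_apply, letterAct_wordVec, cons_append]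

theorem freeRep_eq_of_aRel {x y : FreeAlgebra K Phi} (h : ARel K x y) :
    freeRep K x = freeRep K y := by
  refine endo_ext_wordVec K fun w => ?_
  rcases rule_or_stop_of_aRel h with ⟨l, r, hr, rfl, rfl⟩ | ⟨rfl, rfl⟩
  · rw [freeRep_wrd_wordVec, freeRep_wrd_wordVec, wordVec, wordVec,
      Quot.sound (show Rw (l ++ w) (r ++ w) from ⟨[], w, l, r, hr, rfl, rfl⟩)]
  · rw [freeRep_wrd_wordVec, map_zero, LinearMap.zero_apply, wordVec_eq_zero_iff]
    exact ⟨_, ⟨[], w, rfl⟩, .refl _⟩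

def rep : AlgA K →ₐ[K] Module.End K (ClassSpace K) :=
  RingQuot.liftAlgHom K ⟨freeRep K, fun _ _ => freeRep_eq_of_aRel K⟩

theorem rep_mkw_wordVec (w v : List Phi) :
    rep K (mkw K w) (wordVec K v) = wordVec K (w ++ v) := by
  rw [rep, mkw, RingQuot.liftAlgHom_mkAlgHom_apply]
  exact freeRep_wrd_wordVec K w v

theorem exists_containsStop_eqvGen_of_mkw_eq_zero {w : List Phi} (h : mkw K w = 0) :
    ∃ b, ContainsStop b ∧ EqvGen Rw w b := by
  have hw := rep_mkw_wordVec K w []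
  rwa [h, map_zero, LinearMap.zero_apply, append_nil, eq_comm, wordVec_eq_zero_iff] at hw

end Algebra

end MinskyAlgebra

open MinskyAlgebra

/-- The machine started in the configuration `M(i,j,U,V)` halts in finitely
many steps if and only if there is a positive integer `N` with `t^N · W(i,j,U,V) = 0` in `A`. -/
theorem halts_iff_tN_mul_W_eq_zero (K : Type*) [Field K] (c : Config) :
    Halts c ↔ ∃ N : ℕ, 0 < N ∧ tEl K ^ N * W K c = 0 := by
  constructor
  · rintro ⟨n, c', hn, h4, h3⟩
    have hzero : tEl K ^ n * W K c = 0 := by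
      rw [tEl_pow_mul_W, mkw_eq_of_reflTransGen K (reflTransGen_rw_of_stepsFrom hn), mkw_append,
        mkw_eq_zero_of_containsStop K (containsStop_confWord h4 h3), zero_mul]
    exact ⟨n + 1, n.succ_pos, by rw [pow_succ', mul_assoc, hzero, mul_zero]⟩
  · rintro ⟨N, -, h⟩
    by_contra hc
    obtain ⟨c', hN, hrun⟩ := exists_stepsFrom_of_not_halts hc N
    obtain ⟨b, hb, hwb⟩ :=
      exists_containsStop_eqvGen_of_mkw_eq_zero K ((tEl_pow_mul_W K N c).symm.trans h)
    have hb_nf := rule_isMarked.reflTransGen_of_eqvGen hwb (reflTransGen_rw_of_stepsFrom hN)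
      (rule_isMarked.not_rewriteStep_append_replicate (t_not_mem_confWord c') N)
    exact not_containsStop_confWord_append_replicate hrun N (hb.reflTransGen hb_nf)
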